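/- Every primitive inverse semigroup with zero is 0-cancellative: ab = ac ≠ 0 implies b = c, and ba = ca ≠ 0 implies b = c. -/

import Mathlib

/-- An inverse semigroup structure on a semigroup with zero, given by an inverse map. -/
def IsInverseSemigroup (Q : Type*) [SemigroupWithZero Q] (inv : Q → Q) : Prop :=
  (∀ a : Q, a * inv a * a = a) ∧ (∀ a : Q, inv a * a * inv a = inv a) ∧
  (∀ e f : Q, e * e = e → f * f = f → e * f = f * e)

/-- A primitive inverse semigroup: all nonzero idempotents are primitive. -/
def IsPrimitiveInvSemigroup (Q : Type*) [SemigroupWithZero Q] (inv : Q → Q) : Prop :=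
  IsInverseSemigroup Q inv ∧
  ∀ e : Q, e * e = e → e ≠ 0 →
    ∀ f : Q, f * f = f → e * f = f → f * e = f → f = 0 ∨ f = e

/-- Green's R relation (via Q¹). -/
def GreenR {Q : Type*} [SemigroupWithZero Q] (a b : Q) : Prop :=
  a = b ∨ ∃ u v : Q, a * u = b ∧ b * v = a

/-- Green's L relation (via Q¹). -/
def GreenL {Q : Type*} [SemigroupWithZero Q] (a b : Q) : Prop :=
  a = b ∨ ∃ u v : Q, u * a = b ∧ v * b = a

/-- Categorical at 0. -/
def CategoricalAtZero (S : Type*) [SemigroupWithZero S] : Prop :=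
  ∀ a b c : S, a * b ≠ 0 → b * c ≠ 0 → a * b * c ≠ 0

/-- 0-cancellative. -/
def ZeroCancellative (S : Type*) [SemigroupWithZero S] : Prop :=
  (∀ a b c : S, a * b = a * c → a * b ≠ 0 → b = c) ∧
  (∀ a b c : S, b * a = c * a → b * a ≠ 0 → b = c)

/-- The relation R* on a semigroup, defined via S¹ = WithOne S. -/
def RStar {S : Type*} [SemigroupWithZero S] (a b : S) : Prop :=
  ∀ x y : WithOne S, x * (a : WithOne S) = y * (a : WithOne S) ↔
    x * (b : WithOne S) = y * (b : WithOne S)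

/-- The relation λ on a whole semigroup with zero. -/
def Lam {S : Type*} [SemigroupWithZero S] (a b : S) : Prop :=
  (a = 0 ∧ b = 0) ∨ ∃ x y : S, x * a = y * b ∧ x * a ≠ 0

/-- The relation λ relative to a subset S of Q. -/
def LamOn {Q : Type*} [SemigroupWithZero Q] (S : Set Q) (a b : Q) : Prop :=
  (a = 0 ∧ b = 0) ∨ ∃ x ∈ S, ∃ y ∈ S, x * a = y * b ∧ x * a ≠ 0

/-- The relation ρ relative to a subset S of Q. -/
def RhoOn {Q : Type*} [SemigroupWithZero Q] (S : Set Q) (a b : Q) : Prop :=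
  (a = 0 ∧ b = 0) ∨ ∃ x ∈ S, ∃ y ∈ S, a * x = b * y ∧ a * x ≠ 0

/-- The relation R* on a subset S of Q, defined via S¹. -/
def RStarOn {Q : Type*} [SemigroupWithZero Q] (S : Set Q) (a b : Q) : Prop :=
  (∀ x ∈ S, ∀ y ∈ S, (x * a = y * a ↔ x * b = y * b)) ∧
  (∀ x ∈ S, (x * a = a ↔ x * b = b)) ∧
  (∀ y ∈ S, (a = y * a ↔ b = y * b))

/-- S is a subsemigroup of Q. -/
def IsSubsemigroup {Q : Type*} [SemigroupWithZero Q] (S : Set Q) : Prop :=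
  ∀ a ∈ S, ∀ b ∈ S, a * b ∈ S

/-- S is a left I-order in Q (with respect to the inverse map `inv`). -/
def IsLeftIOrder {Q : Type*} [SemigroupWithZero Q] (S : Set Q) (inv : Q → Q) : Prop :=
  IsSubsemigroup S ∧ ∀ q : Q, ∃ a ∈ S, ∃ b ∈ S, q = inv a * b

/-! Two nonzero idempotents of a primitive inverse semigroup whose product is nonzero coincide,
since their product is a nonzero idempotent below both. Now `a * b ≠ 0` forces
`(inv a * a) * (b * inv b) ≠ 0`, so the idempotent `inv a * a` is a left identity for `b`;
cancelling `a` in `a * b = a * c` amounts to multiplying by `inv a` on the left. -/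

section

variable {Q : Type*} [SemigroupWithZero Q] {inv : Q → Q}

namespace IsInverseSemigroup

theorem isIdempotentElem_inv_mul (hQ : IsInverseSemigroup Q inv) (a : Q) :
    IsIdempotentElem (inv a * a) := by
  rw [IsIdempotentElem, mul_assoc, ← mul_assoc a, hQ.1]

theorem isIdempotentElem_mul_inv (hQ : IsInverseSemigroup Q inv) (a : Q) :
    IsIdempotentElem (a * inv a) := by
  rw [IsIdempotentElem, ← mul_assoc, hQ.1]

theorem mul_inv_mul_self (hQ : IsInverseSemigroup Q inv) (a : Q) : a * (inv a * a) = a := by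
  rw [← mul_assoc, hQ.1]

end IsInverseSemigroup

namespace IsPrimitiveInvSemigroup

theorem eq_of_mul_ne_zero (hQ : IsPrimitiveInvSemigroup Q inv) {e f : Q}
    (he : IsIdempotentElem e) (hf : IsIdempotentElem f) (hef : e * f ≠ 0) : e = f := by
  have hcomm : Commute e f := hQ.1.2.2 e f he hf
  have hidem : IsIdempotentElem (e * f) := he.mul_of_commute hcomm hf
  have below_e : e * f = e := by
    refine (hQ.2 e he (left_ne_zero_of_mul hef) _ hidem ?_ ?_).resolve_left hef
    · rw [← mul_assoc, he.eq]
    · rw [mul_assoc, ← hcomm.eq, ← mul_assoc, he.eq]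
  have below_f : e * f = f := by
    refine (hQ.2 f hf (right_ne_zero_of_mul hef) _ hidem ?_ ?_).resolve_left hef
    · rw [← mul_assoc, ← hcomm.eq, mul_assoc, hf.eq]
    · rw [mul_assoc, hf.eq]
  exact below_e.symm.trans below_f

theorem inv_mul_self_mul_of_mul_ne_zero (hQ : IsPrimitiveInvSemigroup Q inv) {a b : Q}
    (hab : a * b ≠ 0) : inv a * a * b = b := by
  have hb : b * inv b * b = b := hQ.1.1 b
  have hne : inv a * a * (b * inv b) ≠ 0 := by
    intro h
    apply hab
    calc a * b = a * (inv a * a) * (b * inv b * b) := by rw [hQ.1.mul_inv_mul_self, hb]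
      _ = a * (inv a * a * (b * inv b)) * b := by simp only [mul_assoc]
      _ = 0 := by rw [h, mul_zero, zero_mul]
  rw [eq_of_mul_ne_zero hQ (hQ.1.isIdempotentElem_inv_mul a)
    (hQ.1.isIdempotentElem_mul_inv b) hne, hb]

theorem mul_mul_inv_self_of_mul_ne_zero (hQ : IsPrimitiveInvSemigroup Q inv) {a b : Q}
    (hba : b * a ≠ 0) : b * (a * inv a) = b := by
  have hb : b * (inv b * b) = b := hQ.1.mul_inv_mul_self b
  have hne : inv b * b * (a * inv a) ≠ 0 := by
    intro h
    apply hba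
    calc b * a = b * (inv b * b) * (a * inv a * a) := by rw [hb, hQ.1.1]
      _ = b * (inv b * b * (a * inv a)) * a := by simp only [mul_assoc]
      _ = 0 := by rw [h, mul_zero, zero_mul]
  rw [← eq_of_mul_ne_zero hQ (hQ.1.isIdempotentElem_inv_mul b)
    (hQ.1.isIdempotentElem_mul_inv a) hne, hb]

end IsPrimitiveInvSemigroup

end

theorem stmt_5 {Q : Type*} [SemigroupWithZero Q] (inv : Q → Q)
    (hQ : IsPrimitiveInvSemigroup Q inv) : ZeroCancellative Q := by
  constructor
  · intro a b c habc hab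
    rw [← hQ.inv_mul_self_mul_of_mul_ne_zero hab,
      ← hQ.inv_mul_self_mul_of_mul_ne_zero (habc ▸ hab : a * c ≠ 0),
      mul_assoc, mul_assoc, habc]
  · intro a b c habc hba
    rw [← hQ.mul_mul_inv_self_of_mul_ne_zero hba,
      ← hQ.mul_mul_inv_self_of_mul_ne_zero (habc ▸ hba : c * a ≠ 0),
      ← mul_assoc, ← mul_assoc, habc]
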